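/- In the competitive game, the unique action profile that survives elimination of strictly dominated actions is (NotAppend, NotAppend): for each player X, the action NotAppend yields strictly higher utility than Append against every action of the other player, so in any profile in which no player plays a strictly dominated action neither player appends; consequently the liveness requirement of 2-AtomicAppends (both records appended when no client fails) cannot be met by players who never play strictly dominated actions. -/
import Mathlib


/-!
STATEMENT 1. In the competitive game, the unique action profile that survives elimination
of strictly dominated actions is (NotAppend, NotAppend): for each player X, the action
NotAppend yields strictly higher utility than Append against every action of the other
player, so in any profile in which no player plays a strictly dominated action neither
player appends; consequently the liveness requirement of 2-AtomicAppends (both records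
appended when no client fails) cannot be met by players who never play strictly dominated
actions.

Modeling: `uX a b` is the utility of player X when X plays `a` and the other player
plays `b`.
-/

/-- The two actions available to each player. -/
inductive AAct where
  | append
  | notAppend
deriving DecidableEq

/-- The competitive utility model for a player whose utility is `u own other`:
u(only the other player appends) > u(both append) > u(neither appends) > u(only I append). -/
def Competitive (u : AAct → AAct → ℝ) : Prop :=
  u .notAppend .append > u .append .append ∧
  u .append .append > u .notAppend .notAppend ∧
  u .notAppend .notAppend > u .append .notAppend

/-- An action `a` of a player with utility `u` is strictly dominated if some action `a'`
yields strictly higher utility against every action of the other player. -/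
def StrictlyDominated (u : AAct → AAct → ℝ) (a : AAct) : Prop :=
  ∃ a' : AAct, ∀ b : AAct, u a' b > u a b

theorem competitive_elimination_of_dominated_actions
    (uA uB : AAct → AAct → ℝ)
    (hA : Competitive uA) (hB : Competitive uB) :
    -- NotAppend yields strictly higher utility than Append against every action
    ((∀ b : AAct, uA .notAppend b > uA .append b) ∧
     (∀ a : AAct, uB .notAppend a > uB .append a)) ∧
    -- the unique profile surviving elimination of strictly dominated actions
    -- is (NotAppend, NotAppend)
    (∀ a b : AAct, ¬ StrictlyDominated uA a → ¬ StrictlyDominated uB b →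
      a = .notAppend ∧ b = .notAppend) ∧
    -- hence liveness (both append) cannot be met by players who never play
    -- strictly dominated actions
    (∀ a b : AAct, ¬ StrictlyDominated uA a → ¬ StrictlyDominated uB b →
      ¬ (a = .append ∧ b = .append)) := by
  obtain ⟨hA1, hA2, hA3⟩ := hA
  obtain ⟨hB1, hB2, hB3⟩ := hB
  have domA : ∀ b : AAct, uA .notAppend b > uA .append b := by
    intro b; cases b
    · exact hA1
    · exact hA3
  have domB : ∀ b : AAct, uB .notAppend b > uB .append b := by
    intro b; cases b
    · exact hB1
    · exact hB3
  have key : ∀ a b : AAct, ¬ StrictlyDominated uA a → ¬ StrictlyDominated uB b →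
      a = .notAppend ∧ b = .notAppend := by
    intro a b ha hb
    constructor
    · cases a with
      | append => exact absurd ⟨.notAppend, domA⟩ ha
      | notAppend => rfl
    · cases b with
      | append => exact absurd ⟨.notAppend, domB⟩ hb
      | notAppend => rfl
  refine ⟨⟨domA, domB⟩, key, ?_⟩
  intro a b ha hb ⟨h1, h2⟩
  obtain ⟨e1, e2⟩ := key a b ha hb
  simp [h1] at e1
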